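/- The set Y_NE of attacker Nash equilibrium strategies of a security game is a convex polytope: given any fixed Nash equilibrium (x̃, ỹ), a vector y ∈ ℝ^n lies in Y_NE if and only if (i) Σ_i y_i (ρ_i(1 − x̃_i) + ζ_i x̃_i) ≥ ρ_k(1 − x̃_k) + ζ_k x̃_k for all k, (ii) Σ_i y_i (r_i − c_i) x̃_i ≥ Σ_i y_i (r_i − c_i) e_i for all e ∈ E, and (iii) y ∈ Δ_n. -/
import Mathlib


/-- The probability simplex in `ℝ^n`. -/
def simplexSet (n : ℕ) : Set (Fin n → ℝ) := {y | (∀ i, 0 ≤ y i) ∧ ∑ i, y i = 1}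

/-- Defender expected utility in a security game. -/
def Ud {n : ℕ} (r c x y : Fin n → ℝ) : ℝ := ∑ i, y i * (r i * x i + c i * (1 - x i))

/-- Attacker expected utility in a security game. -/
def Ua {n : ℕ} (rho zeta x y : Fin n → ℝ) : ℝ :=
  ∑ i, y i * (rho i * (1 - x i) + zeta i * x i)

/-- `(x, y)` is a Nash equilibrium of the security game with pure strategies `E`
and payoffs `(r, c, rho, zeta)`. -/
def IsNE {n : ℕ} (E : Finset (Fin n → ℝ)) (r c rho zeta x y : Fin n → ℝ) : Prop :=
  x ∈ convexHull ℝ (E : Set (Fin n → ℝ)) ∧ y ∈ simplexSet n ∧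
    (∀ x' ∈ convexHull ℝ (E : Set (Fin n → ℝ)), Ud r c x' y ≤ Ud r c x y) ∧
    (∀ y' ∈ simplexSet n, Ua rho zeta x y' ≤ Ua rho zeta x y)

lemma delta_mem_simplex (n : ℕ) (k : Fin n) :
    (fun i => if i = k then (1:ℝ) else 0) ∈ simplexSet n := by
  constructor
  · intro i; dsimp only; split <;> norm_num
  · simp

lemma Ua_delta {n : ℕ} (rho zeta x : Fin n → ℝ) (k : Fin n) :
    Ua rho zeta x (fun i => if i = k then (1:ℝ) else 0)
      = rho k * (1 - x k) + zeta k * x k := by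
  simp [Ua, ite_mul]

lemma pure_le_Ua {n : ℕ} {E : Finset (Fin n → ℝ)} {r c rho zeta x y : Fin n → ℝ}
    (h : IsNE E r c rho zeta x y) (k : Fin n) :
    rho k * (1 - x k) + zeta k * x k ≤ Ua rho zeta x y := by
  have := h.2.2.2 _ (delta_mem_simplex n k)
  rwa [Ua_delta] at this

lemma Ud_eq {n : ℕ} (r c x y : Fin n → ℝ) :
    Ud r c x y = (∑ i, y i * c i) + ∑ i, y i * (r i - c i) * x i := by
  rw [Ud, ← Finset.sum_add_distrib]
  exact Finset.sum_congr rfl fun i _ => by ring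

lemma sum_le_on_hull {n : ℕ} (E : Finset (Fin n → ℝ)) (w : Fin n → ℝ) (M : ℝ)
    (h : ∀ e ∈ E, ∑ i, w i * e i ≤ M) :
    ∀ x ∈ convexHull ℝ (E : Set (Fin n → ℝ)), ∑ i, w i * x i ≤ M := by
  intro x hx
  have hlin : IsLinearMap ℝ (fun z : Fin n → ℝ => ∑ i, w i * z i) := by
    constructor
    · intro a b; simp [mul_add, Finset.sum_add_distrib]
    · intro cc a
      rw [smul_eq_mul, Finset.mul_sum]
      exact Finset.sum_congr rfl fun i _ => by
        simp [smul_eq_mul]; ring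
  exact convexHull_min (fun e he => h e (Finset.mem_coe.mp he))
    (convex_halfSpace_le hlin M) hx

/-- At a NE, every target in the support of the attacker's strategy gives the
attacker exactly the equilibrium utility. -/
lemma supp_eq_Ua {n : ℕ} {E : Finset (Fin n → ℝ)} {r c rho zeta x y : Fin n → ℝ}
    (h : IsNE E r c rho zeta x y) :
    ∀ i, 0 < y i → rho i * (1 - x i) + zeta i * x i = Ua rho zeta x y := by
  set u := Ua rho zeta x y with hu
  have hk := pure_le_Ua h
  have hzero : ∑ j, y j * (u - (rho j * (1 - x j) + zeta j * x j)) = 0 := by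
    have hrw : ∑ j, y j * (u - (rho j * (1 - x j) + zeta j * x j))
        = (∑ j, y j) * u - Ua rho zeta x y := by
      rw [Ua, Finset.sum_mul, ← Finset.sum_sub_distrib]
      exact Finset.sum_congr rfl fun j _ => by ring
    rw [hrw, h.2.1.2, one_mul, hu, sub_self]
  have hterm := (Finset.sum_eq_zero_iff_of_nonneg (fun j _ =>
    mul_nonneg (h.2.1.1 j) (sub_nonneg.mpr (hk j)))).mp hzero
  intro i hi
  have := hterm i (Finset.mem_univ i)
  rcases mul_eq_zero.mp this with h1 | h2
  · exact absurd h1 (ne_of_gt hi)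
  · linarith [sub_eq_zero.mp h2]

/-- The attacker's utility is the same at all Nash equilibria. -/
lemma value_le {n : ℕ} {E : Finset (Fin n → ℝ)} {r c rho zeta : Fin n → ℝ}
    (hrc : ∀ i, c i < r i) (hrz : ∀ i, zeta i < rho i)
    {x y xt yt : Fin n → ℝ}
    (hNE' : IsNE E r c rho zeta x y) (hNE : IsNE E r c rho zeta xt yt) :
    Ua rho zeta x y ≤ Ua rho zeta xt yt := by
  -- defender optimality of x against y, compared with xt
  have hUd : Ud r c xt y ≤ Ud r c x y := hNE'.2.2.1 xt hNE.1
  rw [Ud_eq, Ud_eq] at hUd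
  have hsum : ∑ i, y i * (r i - c i) * xt i ≤ ∑ i, y i * (r i - c i) * x i := by
    linarith
  -- find a supported target where x covers at least as much as xt
  have hex : ∃ i, 0 < y i ∧ xt i ≤ x i := by
    by_contra hcon
    push_neg at hcon
    have hne : ∃ i ∈ Finset.univ, y i ≠ 0 := by
      apply Finset.exists_ne_zero_of_sum_ne_zero
      rw [hNE'.2.1.2]; norm_num
    obtain ⟨i0, _, hi0⟩ := hne
    have hi0' : 0 < y i0 := lt_of_le_of_ne (hNE'.2.1.1 i0) (Ne.symm hi0)
    have hstrict : ∑ i, y i * (r i - c i) * x i < ∑ i, y i * (r i - c i) * xt i := by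
      refine Finset.sum_lt_sum ?_ ⟨i0, Finset.mem_univ i0, ?_⟩
      · intro i _
        rcases (hNE'.2.1.1 i).eq_or_lt with he | hl
        · rw [← he]; simp
        · have hlt := hcon i hl
          have hg : 0 < y i * (r i - c i) := mul_pos hl (sub_pos.mpr (hrc i))
          nlinarith [mul_pos hg (sub_pos.mpr hlt)]
      · have hlt := hcon i0 hi0'
        have hg : 0 < y i0 * (r i0 - c i0) := mul_pos hi0' (sub_pos.mpr (hrc i0))
        nlinarith [mul_pos hg (sub_pos.mpr hlt)]
    linarith
  obtain ⟨i, hi, hxi⟩ := hex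
  have h1 : rho i * (1 - x i) + zeta i * x i = Ua rho zeta x y := supp_eq_Ua hNE' i hi
  have h2 : rho i * (1 - xt i) + zeta i * xt i ≤ Ua rho zeta xt yt := pure_le_Ua hNE i
  have hd := hrz i
  nlinarith

/-- Interchangeability of Nash equilibria in security games. -/
lemma interchange {n : ℕ} {E : Finset (Fin n → ℝ)} {r c rho zeta : Fin n → ℝ}
    (hrc : ∀ i, c i < r i) (hrz : ∀ i, zeta i < rho i)
    {xt yt x y : Fin n → ℝ}
    (hNE : IsNE E r c rho zeta xt yt) (hNE' : IsNE E r c rho zeta x y) :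
    IsNE E r c rho zeta xt y := by
  have hval : Ua rho zeta x y = Ua rho zeta xt yt :=
    le_antisymm (value_le hrc hrz hNE' hNE) (value_le hrc hrz hNE hNE')
  -- on supp y, xt covers at least as much as x
  have hxt_ge : ∀ i, 0 < y i → x i ≤ xt i := by
    intro i hi
    have h1 : rho i * (1 - x i) + zeta i * x i = Ua rho zeta x y := supp_eq_Ua hNE' i hi
    have h2 : rho i * (1 - xt i) + zeta i * xt i ≤ Ua rho zeta xt yt := pure_le_Ua hNE i
    have hd := hrz i
    nlinarith
  -- termwise comparison of defender linear objectives
  have hterm_le : ∀ i ∈ Finset.univ (α := Fin n),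
      y i * (r i - c i) * x i ≤ y i * (r i - c i) * xt i := by
    intro i _
    rcases (hNE'.2.1.1 i).eq_or_lt with he | hl
    · rw [← he]; simp
    · exact mul_le_mul_of_nonneg_left (hxt_ge i hl)
        (mul_nonneg hl.le (sub_pos.mpr (hrc i)).le)
  have hsum_ge : ∑ i, y i * (r i - c i) * x i ≤ ∑ i, y i * (r i - c i) * xt i :=
    Finset.sum_le_sum hterm_le
  have hUd' : Ud r c xt y ≤ Ud r c x y := hNE'.2.2.1 xt hNE.1
  rw [Ud_eq, Ud_eq] at hUd'
  have hsum_eq : ∑ i, y i * (r i - c i) * x i = ∑ i, y i * (r i - c i) * xt i := by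
    linarith
  -- equality of Ud values
  have hUdeq : Ud r c x y = Ud r c xt y := by rw [Ud_eq, Ud_eq, hsum_eq]
  -- termwise equality, hence xt = x on supp y
  have hzero : ∑ i, (y i * (r i - c i) * xt i - y i * (r i - c i) * x i) = 0 := by
    rw [Finset.sum_sub_distrib, hsum_eq, sub_self]
  have hterm0 := (Finset.sum_eq_zero_iff_of_nonneg (fun i hi =>
    sub_nonneg.mpr (hterm_le i hi))).mp hzero
  have hxeq : ∀ i, 0 < y i → xt i = x i := by
    intro i hi
    have h0 := hterm0 i (Finset.mem_univ i)
    have hg : 0 < y i * (r i - c i) := mul_pos hi (sub_pos.mpr (hrc i))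
    have : y i * (r i - c i) * (xt i - x i) = 0 := by linarith [h0]; 
    rcases mul_eq_zero.mp this with h1 | h2
    · exact absurd h1 (ne_of_gt hg)
    · linarith [sub_eq_zero.mp h2]
  -- attacker utility of y against xt equals the common NE value
  have hUay : Ua rho zeta xt y = Ua rho zeta xt yt := by
    rw [← hval, Ua, Ua]
    apply Finset.sum_congr rfl
    intro i _
    rcases (hNE'.2.1.1 i).eq_or_lt with he | hl
    · rw [← he]; ring
    · rw [hxeq i hl]
  refine ⟨hNE.1, hNE'.2.1, ?_, ?_⟩
  · intro x' hx'
    calc Ud r c x' y ≤ Ud r c x y := hNE'.2.2.1 x' hx'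
    _ = Ud r c xt y := hUdeq
  · intro y' hy'
    have hb : ∀ k, rho k * (1 - xt k) + zeta k * xt k ≤ Ua rho zeta xt yt :=
      pure_le_Ua hNE
    have : Ua rho zeta xt y' ≤ Ua rho zeta xt yt := by
      rw [Ua]
      calc ∑ i, y' i * (rho i * (1 - xt i) + zeta i * xt i)
          ≤ ∑ i, y' i * Ua rho zeta xt yt :=
            Finset.sum_le_sum fun i _ => mul_le_mul_of_nonneg_left (hb i) (hy'.1 i)
        _ = Ua rho zeta xt yt := by rw [← Finset.sum_mul, hy'.2, one_mul]
    rw [hUay]; exact this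


/-- Given a fixed Nash equilibrium `(x̃, ỹ)`, a vector `y` is an attacker
Nash equilibrium strategy iff (i) every target's attacker utility against `x̃` is at most
the expected attacker utility of `y` against `x̃`, (ii) `x̃` is a defender best response
to `y`, and (iii) `y` is in the simplex. Hence `Y_NE` is a polytope. -/
theorem attacker_NE_strategies_polytope
    (n : ℕ) (E : Finset (Fin n → ℝ)) (hE : E.Nonempty)
    (h01 : ∀ e ∈ E, ∀ i, e i = 0 ∨ e i = 1)
    (r c rho zeta : Fin n → ℝ)
    (hrc : ∀ i, c i < r i) (hrz : ∀ i, zeta i < rho i)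
    (xt yt : Fin n → ℝ) (hNE : IsNE E r c rho zeta xt yt)
    (y : Fin n → ℝ) :
    (∃ x ∈ convexHull ℝ (E : Set (Fin n → ℝ)), IsNE E r c rho zeta x y) ↔
      ((∀ k, rho k * (1 - xt k) + zeta k * xt k ≤
          ∑ i, y i * (rho i * (1 - xt i) + zeta i * xt i)) ∧
        (∀ e ∈ E, ∑ i, y i * (r i - c i) * e i ≤ ∑ i, y i * (r i - c i) * xt i) ∧
        y ∈ simplexSet n) := by
  constructor
  · rintro ⟨x, hx, hxy⟩
    have hI : IsNE E r c rho zeta xt y := interchange hrc hrz hNE hxy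
    refine ⟨fun k => pure_le_Ua hI k, ?_, hI.2.1⟩
    intro e he
    have := hI.2.2.1 e (subset_convexHull ℝ (E : Set (Fin n → ℝ)) (Finset.mem_coe.mpr he))
    rw [Ud_eq, Ud_eq] at this
    linarith
  · rintro ⟨h1, h2, h3⟩
    refine ⟨xt, hNE.1, hNE.1, h3, ?_, ?_⟩
    · intro x' hx'
      rw [Ud_eq, Ud_eq]
      have := sum_le_on_hull E (fun i => y i * (r i - c i))
        (∑ i, y i * (r i - c i) * xt i) (fun e he => by
          simpa [mul_assoc] using h2 e he) x' hx'
      simp only [mul_assoc] at this ⊢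
      linarith
    · intro y' hy'
      rw [Ua, Ua]
      calc ∑ i, y' i * (rho i * (1 - xt i) + zeta i * xt i)
          ≤ ∑ i, y' i * ∑ j, y j * (rho j * (1 - xt j) + zeta j * xt j) :=
            Finset.sum_le_sum fun i _ => mul_le_mul_of_nonneg_left (h1 i) (hy'.1 i)
        _ = ∑ j, y j * (rho j * (1 - xt j) + zeta j * xt j) := by
            rw [← Finset.sum_mul, hy'.2, one_mul]
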